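/- If i1 i2 … i_n ∈ Σ_{top,n} with n > 1, then both i2 … i_n and i1 … i_{n−1} belong to Σ_{top,n−1}; i.e., truncating a truncated top address on the left or on the right by one symbol again yields a truncated top address. -/
import Mathlib


/-- `compN f j N = f_{j 0} ∘ f_{j 1} ∘ ⋯ ∘ f_{j (N-1)}`. -/
def compN {m : ℕ} {E : Type*} (f : Fin m → E ≃ E) : (ℕ → Fin m) → ℕ → E → E
  | _, 0 => id
  | j, (N + 1) => f (j 0) ∘ compN f (fun n => j (n + 1)) N

/-- Lexicographic order on `{1,…,m}^ℕ`. -/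
def lexLe {m : ℕ} (j k : ℕ → Fin m) : Prop :=
  j = k ∨ ∃ n : ℕ, (∀ i < n, j i = k i) ∧ j n < k n

/-- Prepend a symbol to an address. -/
def consAddr {m : ℕ} (a : Fin m) (j : ℕ → Fin m) : ℕ → Fin m :=
  fun n => Nat.casesOn n a j

lemma lexLe_antisymm {m : ℕ} {j k : ℕ → Fin m} (h1 : lexLe j k) (h2 : lexLe k j) :
    j = k := by
  rcases h1 with h1 | ⟨n, hn, hlt⟩
  · exact h1
  rcases h2 with h2 | ⟨n', hn', hlt'⟩
  · exact h2.symm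
  exfalso
  rcases lt_trichotomy n n' with h | h | h
  · exact hlt.ne (hn' n h).symm
  · subst h; exact hlt.asymm hlt'
  · exact hlt'.ne (hn n' h).symm

lemma lexLe_tail {m : ℕ} {j k : ℕ → Fin m} (h : lexLe (consAddr (k 0) j) k) :
    lexLe j (fun n => k (n + 1)) := by
  rcases h with h | ⟨n, hn, hlt⟩
  · left; funext i; exact congrFun h (i + 1)
  · cases n with
    | zero => simp [consAddr] at hlt
    | succ n =>
      right
      exact ⟨n, fun i hi => hn (i + 1) (by omega), hlt⟩

lemma pi_eq_f_shift {X : Type*} [MetricSpace X] {m : ℕ} (f : Fin m → X ≃ X)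
    {c : ℝ} (hc0 : 0 ≤ c)
    (hlip : ∀ i : Fin m, ∀ x y : X, dist (f i x) (f i y) ≤ c * dist x y)
    (π : (ℕ → Fin m) → X)
    (hπ : ∀ (j : ℕ → Fin m) (x : X),
      Filter.Tendsto (fun N => compN f j N x) Filter.atTop (nhds (π j)))
    (x0 : X) (j : ℕ → Fin m) :
    π j = f (j 0) (π (fun n => j (n + 1))) := by
  have hcont : Continuous (f (j 0) : X → X) :=
    (LipschitzWith.of_dist_le_mul (K := ⟨c, hc0⟩) (fun a b => hlip (j 0) a b)).continuous
  have h1 : Filter.Tendsto (fun N => compN f j (N + 1) x0) Filter.atTop (nhds (π j)) :=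
    (hπ j x0).comp (Filter.tendsto_add_atTop_nat 1)
  have h2 : Filter.Tendsto (fun N => f (j 0) (compN f (fun n => j (n + 1)) N x0))
      Filter.atTop (nhds (f (j 0) (π (fun n => j (n + 1))))) :=
    (hcont.tendsto _).comp (hπ _ x0)
  exact tendsto_nhds_unique h1 h2

lemma pi_mem_attractor {X : Type*} [MetricSpace X] {m : ℕ} (f : Fin m → X ≃ X)
    (A : Set X) (hAcp : IsCompact A)
    (hA : A = ⋃ i : Fin m, (f i : X → X) '' A)
    (π : (ℕ → Fin m) → X)
    (hπ : ∀ (j : ℕ → Fin m) (x : X),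
      Filter.Tendsto (fun N => compN f j N x) Filter.atTop (nhds (π j)))
    (x0 : X) (hx0 : x0 ∈ A) (j : ℕ → Fin m) : π j ∈ A := by
  have hmemA : ∀ (i : Fin m), ∀ x ∈ A, f i x ∈ A := by
    intro i x hx
    rw [hA]
    exact Set.mem_iUnion.2 ⟨i, ⟨x, hx, rfl⟩⟩
  have hstep : ∀ N (j : ℕ → Fin m), compN f j N x0 ∈ A := by
    intro N
    induction N with
    | zero => intro j; exact hx0
    | succ N ih => intro j; exact hmemA _ _ (ih _)
  exact hAcp.isClosed.mem_of_tendsto (hπ j x0)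
    (Filter.Eventually.of_forall fun N => hstep N j)

/-- If i₁i₂…iₙ ∈ Σ_{top,n} with n > 1, then both i₂…iₙ and i₁…i_{n−1} belong
to Σ_{top,n−1}: truncating a truncated top address on the left or right by one
symbol again yields a truncated top address. -/
theorem truncated_top_address_truncations {X : Type*} [MetricSpace X] [CompleteSpace X]
    {m : ℕ} (hm : 2 ≤ m) (f : Fin m → X ≃ X)
    (c : ℝ) (hc0 : 0 ≤ c) (hc1 : c < 1)
    (hlip : ∀ i : Fin m, ∀ x y : X, dist (f i x) (f i y) ≤ c * dist x y)
    (A : Set X) (hAne : A.Nonempty) (hAcp : IsCompact A)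
    (hA : A = ⋃ i : Fin m, (f i : X → X) '' A)
    (π : (ℕ → Fin m) → X)
    (hπ : ∀ (j : ℕ → Fin m) (x : X),
      Filter.Tendsto (fun N => compN f j N x) Filter.atTop (nhds (π j)))
    (τ : X → (ℕ → Fin m))
    (hτ : ∀ x ∈ A, π (τ x) = x ∧ ∀ k : ℕ → Fin m, π k = x → lexLe k (τ x))
    (N : ℕ) (hN : 1 ≤ N) (w : Fin (N + 1) → Fin m)
    (hw : ∃ k ∈ τ '' A, ∀ i : Fin (N + 1), w i = k (i : ℕ)) :
    (∃ k ∈ τ '' A, ∀ i : Fin N, w i.succ = k (i : ℕ)) ∧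
    (∃ k ∈ τ '' A, ∀ i : Fin N, w i.castSucc = k (i : ℕ)) := by
  obtain ⟨k, hkA, hwk⟩ := hw
  obtain ⟨x, hx, rfl⟩ := hkA
  obtain ⟨x0, hx0⟩ := hAne
  have ht := hτ x hx
  set y := π (fun n => τ x (n + 1)) with hy_def
  have hy : y ∈ A := pi_mem_attractor f A hAcp hA π hπ x0 hx0 _
  have hty := hτ y hy
  have h1 : lexLe (fun n => τ x (n + 1)) (τ y) := hty.2 _ rfl
  have h2 : π (consAddr (τ x 0) (τ y)) = x := by
    rw [pi_eq_f_shift f hc0 hlip π hπ x0 (consAddr (τ x 0) (τ y))]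
    show f (τ x 0) (π (τ y)) = x
    rw [hty.1]
    show f (τ x 0) (π (fun n => τ x (n + 1))) = x
    rw [← pi_eq_f_shift f hc0 hlip π hπ x0 (τ x), ht.1]
  have h3 : lexLe (τ y) (fun n => τ x (n + 1)) := lexLe_tail (ht.2 _ h2)
  have heq : τ y = fun n => τ x (n + 1) := lexLe_antisymm h3 h1
  constructor
  · refine ⟨τ y, ⟨y, hy, rfl⟩, fun i => ?_⟩
    rw [heq]
    have := hwk i.succ
    simpa using this
  · refine ⟨τ x, ⟨x, hx, rfl⟩, fun i => ?_⟩
    have := hwk i.castSucc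
    simpa using this
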